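/- arXiv:2202.12989 — 2 statements merged into one kernel-verified Lean document; each statement's English description precedes it below -/
import Mathlib

section
/- The active set achieves full predictiveness: let p ≥ 1 be an integer and v : Finset (Fin p) → ℝ a monotone set function, and let S₀ ⊆ Fin p be such that ψ_j(v) = 0 for every j ∉ S₀. Then v(S₀) = v(Finset.univ), and consequently v(S₀) ≥ v(s) for every subset s ⊆ Fin p. -/
/-! Every Shapley weight `1/p · C(p-1, |s|)⁻¹` is positive and, by monotonicity, every marginal
gain `v(s ∪ {j}) - v(s)` is nonnegative; so `ψ_j(v) = 0` forces each marginal gain of `j` to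
vanish. Adding the indices outside `S₀` to `S₀` one at a time therefore never changes `v`. -/

/-- The Shapley population variable importance (SPVIM) of index `j` for the set
function `v`: the weighted sum, over all subsets `s` not containing `j`, of the
marginal gain in predictiveness from adding `j` to `s`. -/
noncomputable def spvim (p : ℕ) (v : Finset (Fin p) → ℝ) (j : Fin p) : ℝ :=
  ∑ s ∈ (Finset.univ.erase j).powerset,
    (1 / (p : ℝ)) * ((Nat.choose (p - 1) s.card : ℝ))⁻¹ * (v (insert j s) - v s)

open Finset

theorem spvim_weight_pos {p : ℕ} (j : Fin p) {s : Finset (Fin p)} (hs : s ⊆ univ.erase j) :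
    0 < 1 / (p : ℝ) * ((p - 1).choose #s : ℝ)⁻¹ := by
  have hp : (0 : ℝ) < p := by exact_mod_cast j.pos
  have hcard : #s ≤ p - 1 := by simpa using card_le_card hs
  have hchoose : 0 < (p - 1).choose #s := Nat.choose_pos hcard
  positivity

theorem Monotone.insert_eq_of_spvim_eq_zero {p : ℕ} {v : Finset (Fin p) → ℝ} (hv : Monotone v)
    {j : Fin p} (hj : spvim p v j = 0) (s : Finset (Fin p)) : v (insert j s) = v s := by
  by_cases hjs : j ∈ s
  · rw [insert_eq_of_mem hjs]
  have hs : s ∈ (univ.erase j).powerset := mem_powerset.mpr fun x hx ↦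
    mem_erase.mpr ⟨fun h ↦ hjs (h ▸ hx), mem_univ x⟩
  have hterm_nonneg : ∀ t ∈ (univ.erase j).powerset,
      0 ≤ 1 / (p : ℝ) * ((p - 1).choose #t : ℝ)⁻¹ * (v (insert j t) - v t) := fun t ht ↦
    mul_nonneg (spvim_weight_pos j (mem_powerset.mp ht)).le
      (sub_nonneg.mpr (hv (subset_insert j t)))
  have hterm_zero := (sum_eq_zero_iff_of_nonneg hterm_nonneg).mp hj s hs
  have hgain_zero : v (insert j s) - v s = 0 :=
    (mul_eq_zero.mp hterm_zero).resolve_left (spvim_weight_pos j (mem_powerset.mp hs)).ne'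
  exact sub_eq_zero.mp hgain_zero

theorem union_eq_of_forall_insert_eq {α β : Type*} [DecidableEq α] {v : Finset α → β}
    (s t : Finset α) (hnull : ∀ j ∈ t, ∀ u, v (insert j u) = v u) : v (s ∪ t) = v s := by
  induction t using Finset.induction_on with
  | empty => rw [union_empty]
  | insert a t _ ih =>
    rw [union_insert, hnull a (mem_insert_self a t),
      ih fun j hj ↦ hnull j (mem_insert_of_mem hj)]

theorem active_set_full_predictiveness_general (p : ℕ)
    (v : Finset (Fin p) → ℝ) (hv : Monotone v)
    (S₀ : Finset (Fin p)) (hS₀ : ∀ j ∉ S₀, spvim p v j = 0) :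
    v S₀ = v Finset.univ ∧ ∀ s : Finset (Fin p), v s ≤ v S₀ := by
  have hfull : v S₀ = v univ := by
    rw [← union_compl S₀, union_eq_of_forall_insert_eq S₀ S₀ᶜ fun j hj ↦
      hv.insert_eq_of_spvim_eq_zero (hS₀ j (mem_compl.mp hj))]
  exact ⟨hfull, fun s ↦ hfull ▸ hv (subset_univ s)⟩

/-- The active set achieves full predictiveness: if every index outside `S₀` has zero
Shapley population variable importance for the monotone set function `v`, then
`v(S₀) = v(univ)`, and consequently `v(S₀)` dominates `v(s)` for every subset `s`. -/
theorem active_set_full_predictiveness (p : ℕ) (hp : 1 ≤ p)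
    (v : Finset (Fin p) → ℝ) (hv : Monotone v)
    (S₀ : Finset (Fin p)) (hS₀ : ∀ j ∉ S₀, spvim p v j = 0) :
    v S₀ = v Finset.univ ∧ ∀ s : Finset (Fin p), v s ≤ v S₀ :=
  active_set_full_predictiveness_general p v hv S₀ hS₀
end

section
/- Finite-sample PFP(q) control of Holm-based intrinsic selection followed by augmentation (Theorem 1 instantiated with the Holm procedure): let m ≥ 1 be an integer, α ∈ (0,1), q ∈ (0,1), (Ω, F, P) a probability space, N ⊆ Fin m a set of null indices, and x : Ω → (Fin m → [0,1]) measurable p-values that are superuniform on the nulls, i.e., for every i ∈ N and every u ∈ [0,1], P({ω : x_i(ω) ≤ u}) ≤ u. Let S(ω) ⊆ Fin m be the set rejected by the Holm procedure at level α applied to x(ω), and let A : Ω → Finset (Fin m) be any measurable map such that for every ω, A(ω) ∩ S(ω) = ∅ and |A(ω)| ≤ q · (|A(ω)| + |S(ω)|). Then P({ω : S(ω) ∪ A(ω) ≠ ∅ and |(S(ω) ∪ A(ω)) ∩ N| > q · |S(ω) ∪ A(ω)|}) ≤ α. -/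
/-!
If Holm rejects no null index, every false positive comes from the augmentation, whose size is
at most `q |S ∪ A|`; so a null proportion above `q` forces Holm to reject a null index. The
null index `i₀` of smallest rank `j` then has `|N| ≤ m - j`, hence
`|N| x i₀ ≤ (m - j) x i₀ < α`, and a Bonferroni bound over `N` with superuniformity shows that
this event has probability at most `α`.
-/

open MeasureTheory

/-- The Holm-adjusted p-value of index `i`: with `σ = Tuple.sort x` a rank-ordering of
the p-values `x` (so that `x ∘ σ` is nondecreasing) and `j = σ⁻¹ i` the rank of `i`,
the adjusted p-value is `max_{ℓ ≤ j} min ((m - ℓ) * x (σ ℓ)) 1` (with ranks `ℓ`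
zero-based, so that `m - ℓ` is the paper's `m - ℓ + 1` for one-based ranks). -/
noncomputable def holmAdjusted {m : ℕ} (x : Fin m → ℝ) (i : Fin m) : ℝ :=
  Finset.sup' (Finset.Iic ((Tuple.sort x).symm i)) Finset.nonempty_Iic
    (fun ℓ => min (((m - (ℓ : ℕ) : ℕ) : ℝ) * x (Tuple.sort x ℓ)) 1)

/-- The Holm procedure at level `α` rejects index `i` iff its Holm-adjusted p-value is
below `α`. -/
def holmReject {m : ℕ} (x : Fin m → ℝ) (α : ℝ) (i : Fin m) : Prop :=
  holmAdjusted x i < α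

/-- The set of indices rejected by the Holm procedure at level `α`. -/
noncomputable def holmRejectSet {m : ℕ} (x : Fin m → ℝ) (α : ℝ) : Finset (Fin m) :=
  Finset.univ.filter (fun i => holmAdjusted x i < α)

lemma card_le_sub_of_forall_le {ι : Type*} {m : ℕ} {f : ι → Fin m}
    (hf : Function.Injective f) {N : Finset ι} {j : Fin m} (h : ∀ k ∈ N, j ≤ f k) :
    N.card ≤ m - j :=
  (Finset.card_le_card_of_injOn f (fun k hk => Finset.mem_Ici.2 (h k hk)) hf.injOn).trans
    (Fin.card_Ici j).le

lemma exists_mem_card_mul_lt_of_holmAdjusted_lt {m : ℕ} {x : Fin m → ℝ} {α : ℝ}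
    (hα0 : 0 < α) (hα1 : α ≤ 1) {N : Finset (Fin m)} {i : Fin m} (hiN : i ∈ N)
    (h : holmAdjusted x i < α) : ∃ i₀ ∈ N, (N.card : ℝ) * x i₀ < α := by
  set σ := Tuple.sort x
  obtain ⟨i₀, hi₀N, hmin⟩ := N.exists_min_image σ.symm ⟨i, hiN⟩
  refine ⟨i₀, hi₀N, ?_⟩
  have hstep : min (((m - σ.symm i₀ : ℕ) : ℝ) * x i₀) 1 < α := by
    have := Finset.le_sup' (fun ℓ : Fin m => min (((m - (ℓ : ℕ) : ℕ) : ℝ) * x (σ ℓ)) 1)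
      (Finset.mem_Iic.2 (hmin i hiN))
    simpa only [Equiv.apply_symm_apply] using this.trans_lt h
  have hlt : ((m - σ.symm i₀ : ℕ) : ℝ) * x i₀ < α := by
    rcases min_lt_iff.1 hstep with h | h
    · exact h
    · linarith
  have hcard : N.card ≤ m - σ.symm i₀ := card_le_sub_of_forall_le σ.symm.injective hmin
  rcases le_or_gt 0 (x i₀) with hx | hx
  · exact (mul_le_mul_of_nonneg_right (by exact_mod_cast hcard) hx).trans_lt hlt
  · exact (mul_nonpos_of_nonneg_of_nonpos (Nat.cast_nonneg _) hx.le).trans_lt hα0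

lemma nonempty_inter_of_mul_card_lt_card_inter {ι : Type*} [DecidableEq ι]
    {S A N : Finset ι} {q : ℝ} (hdisj : Disjoint A S)
    (hA : (A.card : ℝ) ≤ q * (A.card + S.card))
    (h : q * (S ∪ A).card < ((S ∪ A) ∩ N).card) : (S ∩ N).Nonempty := by
  by_contra hSN
  rw [Finset.not_nonempty_iff_eq_empty] at hSN
  have hsub : (S ∪ A) ∩ N ⊆ A := by
    rw [Finset.union_inter_distrib_right, hSN, Finset.empty_union]
    exact Finset.inter_subset_left
  have hcard : ((S ∪ A).card : ℝ) = A.card + S.card := by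
    rw [Finset.card_union_of_disjoint hdisj.symm]
    push_cast
    ring
  have : (((S ∪ A) ∩ N).card : ℝ) ≤ A.card := by exact_mod_cast Finset.card_le_card hsub
  rw [hcard] at h
  linarith

lemma measure_exists_card_mul_lt_le {Ω ι : Type*} [MeasurableSpace Ω] (P : Measure Ω)
    (N : Finset ι) (y : Ω → ι → ℝ) {α : ℝ} (hα0 : 0 ≤ α) (hα1 : α ≤ 1)
    (hsuper : ∀ i ∈ N, ∀ u ∈ Set.Icc (0 : ℝ) 1, P {ω | y ω i ≤ u} ≤ ENNReal.ofReal u) :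
    P {ω | ∃ i ∈ N, (N.card : ℝ) * y ω i < α} ≤ ENNReal.ofReal α := by
  rcases N.eq_empty_or_nonempty with rfl | hN
  · simp
  have hn : (0 : ℝ) < N.card := by exact_mod_cast hN.card_pos
  have hαn : α / N.card ∈ Set.Icc (0 : ℝ) 1 :=
    ⟨div_nonneg hα0 hn.le, div_le_one_of_le₀ (hα1.trans (by exact_mod_cast hN.card_pos)) hn.le⟩
  calc P {ω | ∃ i ∈ N, (N.card : ℝ) * y ω i < α}
      ≤ P (⋃ i ∈ N, {ω | y ω i ≤ α / N.card}) := by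
        refine measure_mono fun ω ⟨i, hi, hlt⟩ => Set.mem_biUnion hi ?_
        rw [Set.mem_ofPred_eq, le_div_iff₀ hn]
        linarith
    _ ≤ ∑ i ∈ N, P {ω | y ω i ≤ α / N.card} := measure_biUnion_finset_le _ _
    _ ≤ ∑ _i ∈ N, ENNReal.ofReal (α / N.card) :=
        Finset.sum_le_sum fun i hi => hsuper i hi _ hαn
    _ = ENNReal.ofReal α := by
        rw [Finset.sum_const, nsmul_eq_mul, ← ENNReal.ofReal_natCast,
          ← ENNReal.ofReal_mul (Nat.cast_nonneg _), mul_div_cancel₀ _ hn.ne']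

theorem holm_augmented_pfp_general (m : ℕ) (α : ℝ) (hα : α ∈ Set.Ioo (0 : ℝ) 1)
    (q : ℝ)
    {Ω : Type*} [MeasurableSpace Ω] (P : Measure Ω)
    (N : Finset (Fin m))
    (x : Ω → Fin m → ℝ)
    (hsuper : ∀ i ∈ N, ∀ u ∈ Set.Icc (0 : ℝ) 1,
      P {ω | x ω i ≤ u} ≤ ENNReal.ofReal u)
    (A : Ω → Finset (Fin m))
    (hdisj : ∀ ω, A ω ∩ holmRejectSet (x ω) α = ∅)
    (hprop : ∀ ω, ((A ω).card : ℝ) ≤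
      q * (((A ω).card : ℝ) + ((holmRejectSet (x ω) α).card : ℝ))) :
    P {ω | holmRejectSet (x ω) α ∪ A ω ≠ ∅ ∧
        q * (((holmRejectSet (x ω) α ∪ A ω).card : ℝ)) <
          (((holmRejectSet (x ω) α ∪ A ω) ∩ N).card : ℝ)} ≤ ENNReal.ofReal α := by
  obtain ⟨hα0, hα1⟩ := hα
  refine (measure_mono ?_).trans (measure_exists_card_mul_lt_le P N x hα0.le hα1.le hsuper)
  rintro ω ⟨-, hlt⟩
  obtain ⟨i, hi⟩ := nonempty_inter_of_mul_card_lt_card_inter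
    (Finset.disjoint_iff_inter_eq_empty.2 (hdisj ω)) (hprop ω) hlt
  obtain ⟨hiS, hiN⟩ := Finset.mem_inter.1 hi
  exact exists_mem_card_mul_lt_of_holmAdjusted_lt hα0 hα1.le hiN (Finset.mem_filter.1 hiS).2

/-- Finite-sample PFP(q) control of Holm-based intrinsic selection followed by
augmentation: if the p-values are superuniform on the null indices `N`, the set `S ω`
rejected by the Holm procedure at level `α` is augmented by any measurable set `A ω`
disjoint from `S ω` with `|A ω| ≤ q (|A ω| + |S ω|)`, then the probability that the
proportion of null indices among the selected indices exceeds `q` is at most `α`. -/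
theorem holm_augmented_pfp (m : ℕ) (hm : 1 ≤ m) (α : ℝ) (hα : α ∈ Set.Ioo (0 : ℝ) 1)
    (q : ℝ) (hq : q ∈ Set.Ioo (0 : ℝ) 1)
    {Ω : Type*} [MeasurableSpace Ω] (P : Measure Ω) [IsProbabilityMeasure P]
    (N : Finset (Fin m))
    (x : Ω → Fin m → ℝ) (hxmeas : Measurable x)
    (hx01 : ∀ ω i, x ω i ∈ Set.Icc (0 : ℝ) 1)
    (hsuper : ∀ i ∈ N, ∀ u ∈ Set.Icc (0 : ℝ) 1,
      P {ω | x ω i ≤ u} ≤ ENNReal.ofReal u)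
    (A : Ω → Finset (Fin m))
    (hA : @Measurable Ω (Finset (Fin m)) _ ⊤ A)
    (hdisj : ∀ ω, A ω ∩ holmRejectSet (x ω) α = ∅)
    (hprop : ∀ ω, ((A ω).card : ℝ) ≤
      q * (((A ω).card : ℝ) + ((holmRejectSet (x ω) α).card : ℝ))) :
    P {ω | holmRejectSet (x ω) α ∪ A ω ≠ ∅ ∧
        q * (((holmRejectSet (x ω) α ∪ A ω).card : ℝ)) <
          (((holmRejectSet (x ω) α ∪ A ω) ∩ N).card : ℝ)} ≤ ENNReal.ofReal α :=
  holm_augmented_pfp_general m α hα q P N x hsuper A hdisj hprop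
end
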